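/- arXiv:2311.14622 — 2 statements merged into one kernel-verified Lean document; each statement's English description precedes it below -/
import Mathlib

section
/- Let n ≥ 1, let ρ be a positive semidefinite 2ⁿ×2ⁿ complex matrix with tr(ρ) = 1, and let O be a Hermitian 2ⁿ×2ⁿ complex matrix with tr(O) = 0. Define 𝒞⁽ⁱᵛ⁾ = Σ_{x,y,z ∈ {0,1}ⁿ} |x y z⟩( ⟨x y z| + ⟨z x y| + ⟨y z x| + ⟨y x z| + ⟨x z y| + ⟨z y x| ), a matrix indexed by triples of bit strings. Then | tr( 𝒞⁽ⁱᵛ⁾ (ρ ⊗ O ⊗ O) ) | ≤ 3 tr(O²). -/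
/-!
Expanding `𝒞⁽ⁱᵛ⁾` as the sum of the six permutation operators of the three tensor factors,
each permutation contributes a product of traces over its cycles:
`tr(𝒞⁽ⁱᵛ⁾ (ρ ⊗ O ⊗ O)) = 2 tr(ρ O²) + tr(O²)` once `tr ρ = 1` and `tr O = 0` are used.
Since `ρ ≤ tr(ρ) • 1` in the Loewner order and `O² ≥ 0`, we get `0 ≤ tr(ρ O²) ≤ tr(O²)`.
-/

open Finset Matrix
open scoped ComplexOrder

/-- Bit strings of length `n`. -/
abbrev Bits (n : ℕ) := Fin n → Fin 2

/-- Triples of bit strings. -/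
abbrev Bits3 (n : ℕ) := Bits n × Bits n × Bits n

/-- The standard basis vector `|a b c⟩` of `ℂ^{({0,1}ⁿ)³}`. -/
def ket3 {n : ℕ} (a b c : Bits n) : Bits3 n → ℂ :=
  fun p => if p = (a, b, c) then 1 else 0

/-- The Kronecker product `P ⊗ Q ⊗ R`, a matrix indexed by triples of bit strings. -/
def kron3 {ι : Type*} (P Q R : Matrix ι ι ℂ) : Matrix (ι × ι × ι) (ι × ι × ι) ℂ :=
  Matrix.of fun p q => P p.1 q.1 * Q p.2.1 q.2.1 * R p.2.2 q.2.2

/-- The matrix `𝒞⁽ⁱᵛ⁾ = Σ_{x,y,z} |xyz⟩(⟨xyz|+⟨zxy|+⟨yzx|+⟨yxz|+⟨xzy|+⟨zyx|)`. -/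
noncomputable def Civ (n : ℕ) : Matrix (Bits3 n) (Bits3 n) ℂ :=
  ∑ x : Bits n, ∑ y : Bits n, ∑ z : Bits n,
    Matrix.vecMulVec (ket3 x y z)
      (ket3 x y z + ket3 z x y + ket3 y z x + ket3 y x z + ket3 x z y + ket3 z y x)

open scoped MatrixOrder

namespace Matrix

section TripleSums

variable {ι α : Type*} [Fintype ι] [CommSemiring α] (P Q R : Matrix ι ι α)

theorem sum_eq_trace_mul_trace_mul_trace :
    ∑ x, ∑ y, ∑ z, P x x * Q y y * R z z = P.trace * Q.trace * R.trace := by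
  simp only [trace, diag_apply, sum_mul, mul_sum]
  conv_rhs => rw [sum_comm_cycle]
  exact sum_congr rfl fun _ _ => sum_comm

theorem sum_eq_trace_mul_mul :
    ∑ x, ∑ y, ∑ z, P z x * Q x y * R y z = (P * Q * R).trace := by
  simp only [trace, diag_apply, mul_apply, sum_mul]
  rw [sum_comm_cycle]
  exact sum_congr rfl fun _ _ => sum_comm

theorem sum_eq_trace_mul_mul' :
    ∑ x, ∑ y, ∑ z, P y x * Q z y * R x z = (P * R * Q).trace := by
  simp only [trace, diag_apply, mul_apply, sum_mul]
  rw [sum_comm_cycle, sum_comm_cycle]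
  simp only [mul_right_comm _ (Q _ _)]

theorem sum_eq_trace_mul_mul_trace :
    ∑ x, ∑ y, ∑ z, P y x * Q x y * R z z = (P * Q).trace * R.trace := by
  simp only [trace, diag_apply, mul_apply, sum_mul, mul_sum]
  rw [sum_comm_cycle]
  exact sum_congr rfl fun _ _ => sum_comm

theorem sum_eq_trace_mul_trace_mul :
    ∑ x, ∑ y, ∑ z, P x x * Q z y * R y z = P.trace * (Q * R).trace := by
  simp only [trace, diag_apply, mul_apply, sum_mul, mul_sum, mul_assoc]
  rw [sum_comm_cycle]
  exact sum_congr rfl fun _ _ => sum_comm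

theorem sum_eq_trace_mul_mul_trace' :
    ∑ x, ∑ y, ∑ z, P z x * Q y y * R x z = (P * R).trace * Q.trace := by
  simp only [trace, diag_apply, mul_apply, sum_mul, mul_sum, mul_right_comm _ (Q _ _)]
  rw [sum_comm_cycle, sum_comm_cycle]

end TripleSums

section TraceInequalities

variable {𝕜 n : Type*} [RCLike 𝕜] [Fintype n] {A B : Matrix n n 𝕜}

theorem trace_mono (h : A ≤ B) : A.trace ≤ B.trace :=
  (tracePositiveLinearMap n ℝ 𝕜).monotone' h

namespace PosSemidef

theorem le_algebraMap_re_trace [DecidableEq n] (hA : A.PosSemidef) :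
    A ≤ algebraMap ℝ (Matrix n n 𝕜) (RCLike.re A.trace) := by
  refine le_algebraMap_of_spectrum_le fun x hx => ?_
  obtain ⟨i, rfl⟩ := hA.1.spectrum_real_eq_range_eigenvalues ▸ hx
  rw [hA.1.trace_eq_sum_eigenvalues, map_sum]
  simp only [RCLike.ofReal_re]
  exact single_le_sum (fun j _ => hA.eigenvalues_nonneg j) (mem_univ i)

theorem trace_mul_nonneg (hA : A.PosSemidef) (hB : B.PosSemidef) : 0 ≤ (A * B).trace := by
  classical
  obtain ⟨S, rfl⟩ := CStarAlgebra.nonneg_iff_eq_star_mul_self.mp hB.nonneg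
  rw [← mul_assoc, trace_mul_cycle]
  exact (star_right_conjugate_nonneg hA.nonneg S).posSemidef.trace_nonneg

theorem trace_mul_le_trace_mul_trace (hA : A.PosSemidef) (hB : B.PosSemidef) :
    (A * B).trace ≤ A.trace * B.trace := by
  classical
  obtain ⟨S, rfl⟩ := CStarAlgebra.nonneg_iff_eq_star_mul_self.mp hB.nonneg
  have h_re : (RCLike.re A.trace : 𝕜) = A.trace :=
    RCLike.conj_eq_iff_re.mp (RCLike.conj_eq_iff_im.mpr (RCLike.nonneg_iff.mp hA.trace_nonneg).2)
  rw [← mul_assoc, trace_mul_cycle]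
  calc (S * A * star S).trace
      ≤ (S * algebraMap ℝ (Matrix n n 𝕜) (RCLike.re A.trace) * star S).trace :=
        trace_mono (star_right_conjugate_le_conjugate hA.le_algebraMap_re_trace S)
    _ = A.trace * (star S * S).trace := by
        rw [Algebra.algebraMap_eq_smul_one, mul_smul_one, smul_mul_assoc, trace_smul,
          trace_mul_comm, RCLike.real_smul_eq_coe_mul, h_re]

end PosSemidef

end TraceInequalities

end Matrix

theorem ket3_eq_single {n : ℕ} (a b c : Bits n) : ket3 a b c = Pi.single (a, b, c) 1 := by
  funext p
  simp [ket3, Pi.single_apply]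

theorem trace_vecMulVec_ket3_mul {n : ℕ} (x y z a b c : Bits n)
    (M : Matrix (Bits3 n) (Bits3 n) ℂ) :
    (vecMulVec (ket3 x y z) (ket3 a b c) * M).trace = M (a, b, c) (x, y, z) := by
  rw [ket3_eq_single, ket3_eq_single, ← single_eq_single_vecMulVec_single, trace_single_mul,
    one_smul]

theorem trace_Civ_mul {n : ℕ} (M : Matrix (Bits3 n) (Bits3 n) ℂ) :
    (Civ n * M).trace = ∑ x, ∑ y, ∑ z,
      (M (x, y, z) (x, y, z) + M (z, x, y) (x, y, z) + M (y, z, x) (x, y, z)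
        + M (y, x, z) (x, y, z) + M (x, z, y) (x, y, z) + M (z, y, x) (x, y, z)) := by
  simp only [Civ, sum_mul, trace_sum, vecMulVec_add, Matrix.add_mul, trace_add,
    trace_vecMulVec_ket3_mul]

theorem trace_Civ_mul_kron3 {n : ℕ} (P Q R : Matrix (Bits n) (Bits n) ℂ) :
    (Civ n * kron3 P Q R).trace
      = P.trace * Q.trace * R.trace + (P * Q * R).trace + (P * R * Q).trace
        + (P * Q).trace * R.trace + P.trace * (Q * R).trace + (P * R).trace * Q.trace := by
  simp only [trace_Civ_mul, kron3, of_apply, sum_add_distrib]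
  rw [sum_eq_trace_mul_trace_mul_trace, sum_eq_trace_mul_mul, sum_eq_trace_mul_mul',
    sum_eq_trace_mul_mul_trace, sum_eq_trace_mul_trace_mul, sum_eq_trace_mul_mul_trace']

theorem Complex.norm_le_re_of_nonneg_of_le {z w : ℂ} (hz : 0 ≤ z) (hzw : z ≤ w) :
    ‖z‖ ≤ w.re := by
  have h_norm : ‖z‖ = z.re := by simpa using congrArg re (norm_of_nonneg' hz)
  exact h_norm ▸ re_le_re hzw

theorem Civ_bound_general (n : ℕ)
    (ρ O : Matrix (Bits n) (Bits n) ℂ)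
    (hρ : ρ.PosSemidef) (hρtr : ρ.trace = 1)
    (hO : O.IsHermitian) (hOtr : O.trace = 0) :
    ‖(Civ n * kron3 ρ O O).trace‖ ≤ 3 * ((O * O).trace).re := by
  have hOO : (O * O).PosSemidef := by
    simpa [hO.eq] using posSemidef_conjTranspose_mul_self O
  have h_trace : (Civ n * kron3 ρ O O).trace = 2 * (ρ * (O * O)).trace + (O * O).trace := by
    rw [trace_Civ_mul_kron3, hρtr, hOtr, ← Matrix.mul_assoc]
    ring
  have h_nonneg : 0 ≤ (ρ * (O * O)).trace := hρ.trace_mul_nonneg hOO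
  have h_le : (ρ * (O * O)).trace ≤ (O * O).trace := by
    simpa [hρtr] using hρ.trace_mul_le_trace_mul_trace hOO
  rw [h_trace]
  refine (Complex.norm_le_re_of_nonneg_of_le (w := 3 * (O * O).trace) ?_ ?_).trans_eq (by simp)
  · exact add_nonneg (mul_nonneg zero_le_two h_nonneg) hOO.trace_nonneg
  · calc 2 * (ρ * (O * O)).trace + (O * O).trace
        ≤ 2 * (O * O).trace + (O * O).trace := by gcongr
      _ = 3 * (O * O).trace := by ring

/-- `|tr(𝒞⁽ⁱᵛ⁾ (ρ ⊗ O ⊗ O))| ≤ 3 tr(O²)`. -/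
theorem Civ_bound (n : ℕ) (hn : 1 ≤ n)
    (ρ O : Matrix (Bits n) (Bits n) ℂ)
    (hρ : ρ.PosSemidef) (hρtr : ρ.trace = 1)
    (hO : O.IsHermitian) (hOtr : O.trace = 0) :
    ‖(Civ n * kron3 ρ O O).trace‖ ≤ 3 * ((O * O).trace).re :=
  Civ_bound_general n ρ O hρ hρtr hO hOtr
end

section
/- Let n ≥ 1. Define the ESPOVM frame operator as the 4ⁿ×4ⁿ matrix (indexed by pairs of bit strings) F_es = (2ⁿ/|𝒜ₙ|) Σ_{A ∈ 𝒜ₙ} v_A v_A†, where v_A = φ^{eq}_A ⊗ conj(φ^{eq}_A). Then (1) F_es = (1/2ⁿ) ( I + Σ_{x ≠ y ∈ {0,1}ⁿ} |x x⟩⟨y y| ), and (2) for any two distinct bit strings z₁ ≠ z₂, F_es annihilates the vector e_{(z₁,z₁)} − e_{(z₂,z₂)}; in particular F_es is not invertible, so the ESPOVM alone is not informationally complete. -/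
open Finset Matrix

open Classical in
/-- The index set `𝒜ₙ`: symmetric `n × n` matrices with diagonal entries in `{0,1,2,3}`
and off-diagonal entries in `{0,1}` (encoded inside `Fin 4`). -/
noncomputable def An (n : ℕ) : Finset (Matrix (Fin n) (Fin n) (Fin 4)) :=
  Finset.univ.filter fun A => (∀ i j, A i j = A j i) ∧ ∀ i j, i ≠ j → (A i j : ℕ) < 2

/-- The quadratic form `xᵀ A x`, computed in `ℤ` (here in `ℕ`). -/
def quadA {n : ℕ} (A : Matrix (Fin n) (Fin n) (Fin 4)) (x : Bits n) : ℕ :=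
  ∑ i, ∑ j, (A i j : ℕ) * (x i : ℕ) * (x j : ℕ)

/-- The complex equatorial stabilizer state `φ^{eq}_A`. -/
noncomputable def phiEq {n : ℕ} (A : Matrix (Fin n) (Fin n) (Fin 4)) (x : Bits n) : ℂ :=
  Complex.I ^ quadA A x / (Real.sqrt (2 ^ n) : ℂ)

/-- The vectorization `v_A = φ^{eq}_A ⊗ conj(φ^{eq}_A)` of the projector onto `φ^{eq}_A`. -/
noncomputable def vEq {n : ℕ} (A : Matrix (Fin n) (Fin n) (Fin 4)) :
    Bits n × Bits n → ℂ :=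
  fun p => phiEq A p.1 * (starRingEnd ℂ) (phiEq A p.2)

/-- The ESPOVM frame operator `F_es = (2ⁿ/|𝒜ₙ|) Σ_{A ∈ 𝒜ₙ} v_A v_A†`. -/
noncomputable def Fes (n : ℕ) : Matrix (Bits n × Bits n) (Bits n × Bits n) ℂ :=
  ((2 : ℂ) ^ n / ((An n).card : ℂ)) •
    ∑ A ∈ An n, Matrix.vecMulVec (vEq A) (star (vEq A))

/-- The standard basis vector `e_{(x,y)}` of `ℂ^{{0,1}ⁿ×{0,1}ⁿ}`. -/
def ePair {n : ℕ} (x y : Bits n) : Bits n × Bits n → ℂ :=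
  fun p => if p = (x, y) then 1 else 0

/-! Write `w_{ij}` for the exponent of `i` contributed by the entry `a_{ij}` to
`v_A(x,y) · conj v_A(x',y') = i^{q(x) - q(y) - q(x') + q(y')} / 4ⁿ`, where `q(x) = xᵀAx`.
Parametrizing `𝒜ₙ` by its independent diagonal entries (in `ℤ/4`) and upper entries (in `ℤ/2`),
the average over `A` factorizes into one character sum per entry, so an entry of `F_es` is `2⁻ⁿ`
if `4 ∣ w_{ii}` for all `i` and `2 ∣ w_{ij}` for all `i < j`, and `0` otherwise. On bits these
divisibilities say exactly that `x = y ∧ x' = y'` or `(x, y) = (x', y')`. In particular the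
column of `F_es` at `(z, z)` does not depend on `z`. -/

theorem Finset.prod_prod_eq_prod_diag_mul_prod_lt {ι M : Type*} [Fintype ι] [LinearOrder ι]
    [CommMonoid M] (g : ι → ι → M) :
    ∏ i, ∏ j, g i j
      = (∏ i, g i i) * ∏ p : {p : ι × ι // p.1 < p.2}, g p.1.1 p.1.2 * g p.1.2 p.1.1 := by
  have trichotomy : ∀ i j, g i j = (if i = j then g i j else 1) * ((if i < j then g i j else 1)
      * (if j < i then g i j else 1)) := fun i j => by
    rcases lt_trichotomy i j with h | rfl | h
    · simp [h, h.ne, not_lt_of_gt h]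
    · simp
    · simp [h, h.ne', not_lt_of_gt h]
  conv_lhs => enter [2, i, 2, j]; rw [trichotomy i j]
  rw [← prod_subtype (univ.filter fun p : ι × ι => p.1 < p.2) (by simp)
    fun p => g p.1 p.2 * g p.2 p.1, prod_filter, Fintype.prod_prod_type]
  simp only [prod_mul_distrib, prod_ite_eq, mem_univ, if_true]
  rw [prod_comm (f := fun i j => if j < i then g i j else 1)]
  congr 1
  simp only [← prod_mul_distrib]
  exact Fintype.prod_congr _ _ fun i => Fintype.prod_congr _ _ fun j => by split_ifs <;> simp

theorem IsPrimitiveRoot.sum_fin_pow_mul {K : Type*} [Field K] {ζ : K} {m : ℕ}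
    (hζ : IsPrimitiveRoot ζ m) (w : ℕ) :
    ∑ a : Fin m, ζ ^ ((a : ℕ) * w) = if m ∣ w then (m : K) else 0 := by
  simp only [mul_comm _ w, pow_mul]
  rw [Fin.sum_univ_eq_sum_range (fun a => (ζ ^ w) ^ a)]
  split_ifs with h
  · simp [(hζ.pow_eq_one_iff_dvd w).mpr h]
  · rw [geom_sum_eq ((hζ.pow_eq_one_iff_dvd w).not.mpr h), ← pow_mul, mul_comm, pow_mul,
      hζ.pow_eq_one, one_pow, sub_self, zero_div]

section Parametrization

variable {n : ℕ}

abbrev UpperPos (n : ℕ) := {p : Fin n × Fin n // p.1 < p.2}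

abbrev AnParam (n : ℕ) := (Fin n → Fin 4) × (UpperPos n → Fin 2)

namespace AnParam

def toMatrix (b : AnParam n) : Matrix (Fin n) (Fin n) (Fin 4) := fun i j =>
  if h : i < j then Fin.castLE (by norm_num) (b.2 ⟨(i, j), h⟩)
  else if h' : j < i then Fin.castLE (by norm_num) (b.2 ⟨(j, i), h'⟩)
  else b.1 i

def ofMatrix (A : Matrix (Fin n) (Fin n) (Fin 4)) : AnParam n :=
  (fun i => A i i, fun p => ⟨(A p.1.1 p.1.2 : ℕ) % 2, Nat.mod_lt _ two_pos⟩)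

lemma toMatrix_self (b : AnParam n) (i : Fin n) : b.toMatrix i i = b.1 i := by
  simp [toMatrix]

lemma val_toMatrix_of_lt (b : AnParam n) {i j : Fin n} (h : i < j) :
    (b.toMatrix i j : ℕ) = b.2 ⟨(i, j), h⟩ := by
  simp [toMatrix, h]

lemma val_toMatrix_of_gt (b : AnParam n) {i j : Fin n} (h : j < i) :
    (b.toMatrix i j : ℕ) = b.2 ⟨(j, i), h⟩ := by
  simp [toMatrix, h, not_lt_of_gt h]

lemma toMatrix_mem (b : AnParam n) : b.toMatrix ∈ An n := by
  simp only [An, mem_filter, mem_univ, true_and]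
  refine ⟨fun i j => ?_, fun i j hij => ?_⟩
  · rcases lt_trichotomy i j with h | rfl | h
    · exact Fin.ext <| by rw [val_toMatrix_of_lt b h, val_toMatrix_of_gt b h]
    · rfl
    · exact Fin.ext <| by rw [val_toMatrix_of_gt b h, val_toMatrix_of_lt b h]
  · rcases hij.lt_or_gt with h | h
    · rw [val_toMatrix_of_lt b h]; exact Fin.isLt _
    · rw [val_toMatrix_of_gt b h]; exact Fin.isLt _

lemma toMatrix_ofMatrix {A : Matrix (Fin n) (Fin n) (Fin 4)} (hA : A ∈ An n) :
    (ofMatrix A).toMatrix = A := by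
  simp only [An, mem_filter, mem_univ, true_and] at hA
  obtain ⟨hsymm, hoff⟩ := hA
  ext i j : 1
  rcases lt_trichotomy i j with h | rfl | h
  · exact Fin.ext <| by simp [val_toMatrix_of_lt _ h, ofMatrix, Nat.mod_eq_of_lt (hoff i j h.ne)]
  · exact toMatrix_self _ i
  · exact Fin.ext <| by
      simp [val_toMatrix_of_gt _ h, ofMatrix, Nat.mod_eq_of_lt (hoff j i h.ne), hsymm i j]

lemma ofMatrix_toMatrix (b : AnParam n) : ofMatrix b.toMatrix = b := by
  refine Prod.ext (funext fun i => toMatrix_self b i) (funext fun p => Fin.ext ?_)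
  simp [ofMatrix, val_toMatrix_of_lt _ p.2, Nat.mod_eq_of_lt (b.2 p).isLt]

def equivAn : AnParam n ≃ {A // A ∈ An n} where
  toFun b := ⟨b.toMatrix, b.toMatrix_mem⟩
  invFun A := ofMatrix A
  left_inv := ofMatrix_toMatrix
  right_inv A := Subtype.ext (toMatrix_ofMatrix A.2)

end AnParam

lemma sum_An {M : Type*} [AddCommMonoid M] (f : Matrix (Fin n) (Fin n) (Fin 4) → M) :
    ∑ A ∈ An n, f A = ∑ b : AnParam n, f b.toMatrix :=
  (sum_coe_sort _ _).symm.trans (AnParam.equivAn.sum_comp fun A => f A.1).symm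

lemma card_An : #(An n) = 4 ^ n * 2 ^ Fintype.card (UpperPos n) := by
  simpa using (Fintype.card_congr (AnParam.equivAn (n := n))).symm

lemma sum_An_pow {R : Type*} [CommSemiring R] (z : R) (w : Fin n → Fin n → ℕ) :
    ∑ A ∈ An n, z ^ (∑ i, ∑ j, (A i j : ℕ) * w i j)
      = (∏ i, ∑ a : Fin 4, z ^ ((a : ℕ) * w i i)) *
        ∏ p : UpperPos n, ∑ a : Fin 2, z ^ ((a : ℕ) * (w p.1.1 p.1.2 + w p.1.2 p.1.1)) := by
  have factor : ∀ b : AnParam n, z ^ (∑ i, ∑ j, (b.toMatrix i j : ℕ) * w i j)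
      = (∏ i, z ^ ((b.1 i : ℕ) * w i i)) *
        ∏ p : UpperPos n, z ^ ((b.2 p : ℕ) * (w p.1.1 p.1.2 + w p.1.2 p.1.1)) := by
    intro b
    simp only [← prod_pow_eq_pow_sum]
    rw [prod_prod_eq_prod_diag_mul_prod_lt]
    congr 1
    · simp [AnParam.toMatrix_self]
    · refine Fintype.prod_congr _ _ fun p => ?_
      rw [AnParam.val_toMatrix_of_lt b p.2, AnParam.val_toMatrix_of_gt b p.2, ← pow_add, mul_add]
  simp only [sum_An, factor, Fintype.sum_prod_type, ← Fintype.sum_mul_sum, Fintype.prod_sum]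

end Parametrization

open Complex ComplexConjugate

lemma conj_I_pow (k : ℕ) : conj (I ^ k) = I ^ (3 * k) := by
  rw [map_pow, conj_I, pow_mul, I_pow_three]

section FrameOperator

variable {n : ℕ}

lemma phiEq_mul_conj (A : Matrix (Fin n) (Fin n) (Fin 4)) (x y : Bits n) :
    phiEq A x * conj (phiEq A y) = I ^ (quadA A x + 3 * quadA A y) / 2 ^ n := by
  have hnorm : (Real.sqrt (2 ^ n) : ℂ) * Real.sqrt (2 ^ n) = 2 ^ n := by
    rw [← ofReal_mul, Real.mul_self_sqrt (by positivity)]; push_cast; rfl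
  rw [phiEq, phiEq, map_div₀, conj_ofReal, conj_I_pow, div_mul_div_comm, ← pow_add, hnorm]

/-- Since `3 ≡ -1 (mod 4)`, a factor `3` in the exponent of `I` stands for complex
conjugation. -/
def phaseWeight (x y x' y' : Bits n) (i j : Fin n) : ℕ :=
  x i * x j + 3 * (y i * y j) + 3 * (x' i * x' j) + y' i * y' j

lemma phaseWeight_comm (x y x' y' : Bits n) (i j : Fin n) :
    phaseWeight x y x' y' i j = phaseWeight x y x' y' j i := by
  simp only [phaseWeight]; ring

lemma vEq_mul_conj (A : Matrix (Fin n) (Fin n) (Fin 4)) (x y x' y' : Bits n) :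
    vEq A (x, y) * conj (vEq A (x', y'))
      = I ^ (∑ i, ∑ j, (A i j : ℕ) * phaseWeight x y x' y' i j) / 4 ^ n := by
  have hexp : quadA A x + 3 * quadA A y + (quadA A y' + 3 * quadA A x')
      = ∑ i, ∑ j, (A i j : ℕ) * phaseWeight x y x' y' i j := by
    simp only [quadA, phaseWeight, mul_sum, ← sum_add_distrib]
    exact Fintype.sum_congr _ _ fun i => Fintype.sum_congr _ _ fun j => by ring
  have hconj : conj (vEq A (x', y')) = phiEq A y' * conj (phiEq A x') := by
    rw [vEq, map_mul, conj_conj, mul_comm]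
  rw [hconj, vEq, phiEq_mul_conj, phiEq_mul_conj, div_mul_div_comm, ← pow_add, hexp, ← mul_pow]
  norm_num

lemma four_dvd_phaseWeight_self_iff (x y x' y' : Bits n) (i : Fin n) :
    4 ∣ phaseWeight x y x' y' i i ↔ (x i = y i ∧ x' i = y' i) ∨ (x i = x' i ∧ y i = y' i) := by
  have bits : ∀ a b c d : Fin 2, 4 ∣ (a * a + 3 * (b * b) + 3 * (c * c) + d * d : ℕ) ↔
      (a = b ∧ c = d) ∨ (a = c ∧ b = d) := by decide
  exact bits _ _ _ _

lemma sum_I_pow_phaseWeight_self (x y x' y' : Bits n) (i : Fin n) :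
    ∑ a : Fin 4, I ^ ((a : ℕ) * phaseWeight x y x' y' i i)
      = if (x i = y i ∧ x' i = y' i) ∨ (x i = x' i ∧ y i = y' i) then 4 else 0 := by
  simp only [isPrimitiveRoot_I.sum_fin_pow_mul, four_dvd_phaseWeight_self_iff, Nat.cast_ofNat]

lemma sum_I_pow_phaseWeight_add (x y x' y' : Bits n) (i j : Fin n) :
    ∑ a : Fin 2, I ^ ((a : ℕ) * (phaseWeight x y x' y' i j + phaseWeight x y x' y' j i))
      = if 2 ∣ phaseWeight x y x' y' i j then 2 else 0 := by
  have hI : ∀ a w : ℕ, I ^ (a * (w + w)) = (-1) ^ (a * w) := fun a w => by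
    rw [← two_mul, mul_left_comm, pow_mul, I_sq]
  simp only [← phaseWeight_comm x y x' y' i j, hI]
  rw [(IsPrimitiveRoot.neg_one 0 (by norm_num)).sum_fin_pow_mul, Nat.cast_ofNat]

/-- At a coordinate where `x ≠ y`, the diagonal condition forces `x = x'` and `y = y'` there; the
parity of the pair with any other coordinate then propagates this pattern to it. -/
lemma phaseWeight_conditions_iff (x y x' y' : Bits n) :
    ((∀ i, (x i = y i ∧ x' i = y' i) ∨ (x i = x' i ∧ y i = y' i)) ∧
      ∀ p : UpperPos n, 2 ∣ phaseWeight x y x' y' p.1.1 p.1.2)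
      ↔ (x = y ∧ x' = y') ∨ (x = x' ∧ y = y') := by
  constructor
  · rintro ⟨hdiag, hupper⟩
    by_cases hxy : x = y
    · refine Or.inl ⟨hxy, funext fun i => ?_⟩
      rcases hdiag i with h | h
      · exact h.2
      · rw [← h.1, ← h.2, hxy]
    obtain ⟨i₀, hi₀⟩ := Function.ne_iff.mp hxy
    have hpair : ∀ j, j ≠ i₀ → 2 ∣ phaseWeight x y x' y' i₀ j := fun j hj => by
      rcases hj.lt_or_gt with h | h
      · rw [phaseWeight_comm]; exact hupper ⟨(j, i₀), h⟩
      · exact hupper ⟨(i₀, j), h⟩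
    have bits : ∀ a b a' b' c' d' : Fin 2, a ≠ b →
        (a' = b' ∧ c' = d') ∨ (a' = c' ∧ b' = d') →
        2 ∣ (a * a' + 3 * (b * b') + 3 * (a * c') + b * d' : ℕ) → a' = c' ∧ b' = d' := by
      decide
    have hi₀' : x i₀ = x' i₀ ∧ y i₀ = y' i₀ := (hdiag i₀).resolve_left fun h => hi₀ h.1
    have hcoord : ∀ j, x j = x' j ∧ y j = y' j := fun j => by
      by_cases hj : j = i₀
      · exact hj ▸ hi₀'
      · have h := hpair j hj
        rw [phaseWeight, ← hi₀'.1, ← hi₀'.2] at h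
        exact bits _ _ _ _ _ _ hi₀ (hdiag j) h
    exact Or.inr ⟨funext fun j => (hcoord j).1, funext fun j => (hcoord j).2⟩
  · rintro (⟨rfl, rfl⟩ | ⟨rfl, rfl⟩)
    · refine ⟨fun i => Or.inl ⟨rfl, rfl⟩, fun p => ⟨2 * (x p.1.1 * x p.1.2 : ℕ)
        + 2 * (x' p.1.1 * x' p.1.2 : ℕ), by simp only [phaseWeight]; ring⟩⟩
    · refine ⟨fun i => Or.inr ⟨rfl, rfl⟩, fun p => ⟨2 * (x p.1.1 * x p.1.2 : ℕ)
        + 2 * (y p.1.1 * y p.1.2 : ℕ), by simp only [phaseWeight]; ring⟩⟩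

lemma Fes_apply (x y x' y' : Bits n) :
    Fes n (x, y) (x', y')
      = if (x = y ∧ x' = y') ∨ (x = x' ∧ y = y') then ((2 : ℂ) ^ n)⁻¹ else 0 := by
  simp only [Fes, Matrix.smul_apply, Matrix.sum_apply, vecMulVec_apply, Pi.star_apply,
    Complex.star_def, vEq_mul_conj, ← sum_div, sum_An_pow, sum_I_pow_phaseWeight_self,
    sum_I_pow_phaseWeight_add, Fintype.prod_ite_zero, ite_zero_mul_ite_zero,
    phaseWeight_conditions_iff]
  split_ifs
  · simp only [prod_const, card_univ, Fintype.card_fin, card_An, smul_eq_mul]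
    push_cast
    rw [show (4 : ℂ) ^ n = 2 ^ n * 2 ^ n by rw [← mul_pow]; norm_num]
    field_simp
  · simp

lemma one_add_sum_single_apply (x y x' y' : Bits n) :
    ((1 : Matrix (Bits n × Bits n) (Bits n × Bits n) ℂ)
      + ∑ p ∈ univ.filter (fun p : Bits n × Bits n => p.1 ≠ p.2),
          single (p.1, p.1) (p.2, p.2) (1 : ℂ)) (x, y) (x', y')
      = if (x = y ∧ x' = y') ∨ (x = x' ∧ y = y') then 1 else 0 := by
  have hcond : ∀ c : Bits n × Bits n, ((c.1, c.1) = (x, y) ∧ (c.2, c.2) = (x', y'))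
      ↔ (x = y ∧ x' = y') ∧ c = (x, x') := by
    rintro ⟨a, b⟩
    simp only [Prod.mk.injEq]
    grind
  simp only [Matrix.add_apply, one_apply, Matrix.sum_apply, single_apply, hcond, ite_and,
    sum_ite_irrel, sum_ite_eq', sum_const_zero, mem_filter, mem_univ, true_and]
  split_ifs <;> grind

lemma ePair_eq_single (x y : Bits n) : ePair x y = Pi.single (x, y) 1 := by
  ext p
  simp [ePair, Pi.single_apply]

lemma Fes_mulVec_ePair_self (z : Bits n) :
    Fes n *ᵥ ePair z z = fun p => if p.1 = p.2 then ((2 : ℂ) ^ n)⁻¹ else 0 := by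
  ext ⟨a, b⟩
  rw [ePair_eq_single, mulVec_single_one, col_apply, Fes_apply]
  grind

end FrameOperator

/-- (1) the explicit form of the ESPOVM frame operator,
(2) it annihilates every `e_{(z₁,z₁)} − e_{(z₂,z₂)}` with `z₁ ≠ z₂`, and
(3) in particular it is not invertible (the ESPOVM alone is not informationally
complete). -/
theorem espovm_frame_operator (n : ℕ) (hn : 1 ≤ n) :
    (Fes n = ((2 : ℂ) ^ n)⁻¹ •
        ((1 : Matrix (Bits n × Bits n) (Bits n × Bits n) ℂ)
          + ∑ p ∈ Finset.univ.filter (fun p : Bits n × Bits n => p.1 ≠ p.2),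
              Matrix.single (p.1, p.1) (p.2, p.2) (1 : ℂ)))
      ∧ (∀ z₁ z₂ : Bits n, z₁ ≠ z₂ → (Fes n) *ᵥ (ePair z₁ z₁ - ePair z₂ z₂) = 0)
      ∧ ¬ IsUnit (Fes n) := by
  have hker : ∀ z₁ z₂ : Bits n, Fes n *ᵥ (ePair z₁ z₁ - ePair z₂ z₂) = 0 := fun z₁ z₂ => by
    rw [mulVec_sub, Fes_mulVec_ePair_self, Fes_mulVec_ePair_self, sub_self]
  refine ⟨?_, fun z₁ z₂ _ => hker z₁ z₂, ?_⟩
  · ext ⟨x, y⟩ ⟨x', y'⟩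
    rw [Fes_apply, Matrix.smul_apply, one_add_sum_single_apply, smul_ite, smul_eq_mul, mul_one,
      smul_zero]
  · obtain ⟨z₁, z₂, hz⟩ : ∃ z₁ z₂ : Bits n, z₁ ≠ z₂ :=
      ⟨0, 1, fun h => by simpa using congrFun h ⟨0, hn⟩⟩
    have hne : ePair z₁ z₁ - ePair z₂ z₂ ≠ 0 := fun h => by
      simpa [ePair, hz] using congrFun h (z₁, z₁)
    rw [isUnit_iff_isUnit_det, isUnit_iff_ne_zero, not_not, ← exists_mulVec_eq_zero_iff]
    exact ⟨_, hne, hker z₁ z₂⟩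
end
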